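/- arXiv:1511.09449 — 2 statements merged into one kernel-verified Lean document; each statement's English description precedes it below -/
import Mathlib

section
/- Let K ≥ 2 be an integer, let q_1, …, q_K be positive real numbers, and let β > 0 satisfy q_1^{1/β} + q_2^{1/β} + ⋯ + q_K^{1/β} = 1. Then (1/K) ∑_{i=1}^K ln q_i / ln K ≤ −β; equivalently, the average of the radix-K logarithms of the q_i is at most −β. -/
/-!
Put `p i = q i ^ (1/β)`, so that `∑ p i = 1` and `log q i = β log p i`. The elementary bound
`log (K p) ≤ K p - 1`, summed over the letters, gives `∑ log p i ≤ -K log K` (AM–GM for the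
`p i`), and multiplying by `β > 0` yields the claim.
-/

open Finset Real

theorem Real.sum_log_le_neg_card_mul_log_card {ι : Type*} (s : Finset ι) (p : ι → ℝ)
    (hp : ∀ i ∈ s, 0 < p i) (hsum : ∑ i ∈ s, p i = 1) :
    ∑ i ∈ s, log (p i) ≤ -(#s * log #s) := by
  have hlog_mul_le (i : ι) (hi : i ∈ s) : log #s + log (p i) ≤ #s * p i - 1 := by
    have hs : (0 : ℝ) < #s := by exact_mod_cast card_pos.mpr ⟨i, hi⟩
    rw [← log_mul hs.ne' (hp i hi).ne']
    exact log_le_sub_one_of_pos (mul_pos hs (hp i hi))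
  have := sum_le_sum hlog_mul_le
  rw [sum_add_distrib, sum_sub_distrib, ← mul_sum, hsum] at this
  simp only [sum_const, nsmul_eq_mul, mul_one] at this
  linarith

/-- If `β > 0` satisfies `∑ i, (q i) ^ (1/β) = 1` for positive `q i`, then the average
radix-`K` logarithm of the letter probabilities, `(1/(K ln K)) ∑ i, ln (q i)`, is at
most `-β`. -/
theorem avg_logK_le_neg_beta (K : ℕ) (hK : 2 ≤ K) (q : Fin K → ℝ) (hq : ∀ i, 0 < q i)
    (β : ℝ) (hβ : 0 < β) (heq : ∑ i, (q i) ^ (1 / β : ℝ) = 1) :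
    (1 / (K * Real.log K) : ℝ) * ∑ i, Real.log (q i) ≤ -β := by
  have hlogK : 0 < log K := log_pos (by exact_mod_cast hK)
  have hsum_log : (1 / β) * ∑ i, log (q i) ≤ -(K * log K) := by
    have := sum_log_le_neg_card_mul_log_card univ _
      (fun i _ => rpow_pos_of_pos (hq i) (1 / β)) heq
    simpa only [log_rpow (hq _), ← mul_sum, card_univ, Fintype.card_fin] using this
  rw [one_div_mul_eq_div, div_le_iff₀ (by positivity)]
  rw [one_div_mul_eq_div, div_le_iff₀ hβ] at hsum_log
  linarith
end

section
/- Let 0 < s < 1 and for each integer K ≥ 2 let q_{K,1}, …, q_{K,K} be positive real numbers with ∑_{i=1}^K q_{K,i} = 1 − s, and let β_K > 1 be the unique solution of ∑_{i=1}^K q_{K,i}^{1/β_K} = 1. If m̄_K = (1/(K ln K)) ∑_{i=1}^K ln q_{K,i} converges to −1 as K → ∞, then β_K → 1 as K → ∞. -/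
/-!
Put `xᵢ = q_{K,i}^{1/β_K}`, so that `∑ xᵢ = 1`. Summing `log (K xᵢ) ≤ K xᵢ - 1` gives
`K ln K + (1/β_K) ∑ ln q_{K,i} ≤ 0`, that is `1 < β_K ≤ -m̄_K`; since `-m̄_K → 1`, `β_K` is squeezed
to `1`.
-/

open Real Finset Filter

theorem sum_log_le_of_sum_eq_one {ι : Type*} [Fintype ι] {x : ι → ℝ} (hx : ∀ i, 0 < x i)
    (hsum : ∑ i, x i = 1) :
    ∑ i, log (x i) ≤ -(Fintype.card ι * log (Fintype.card ι)) := by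
  have hn : (0 : ℝ) < Fintype.card ι := by
    have : Nonempty ι := by
      by_contra h
      simp [not_nonempty_iff.mp h] at hsum
    exact_mod_cast Fintype.card_pos
  have hlog : ∑ i, log (Fintype.card ι * x i) ≤ ∑ i, (Fintype.card ι * x i - 1) :=
    sum_le_sum fun i _ => log_le_sub_one_of_pos (mul_pos hn (hx i))
  simp only [log_mul hn.ne' (hx _).ne', sum_add_distrib, sum_sub_distrib, ← mul_sum, hsum,
    sum_const, card_univ, nsmul_eq_mul] at hlog
  linarith

theorem le_neg_avg_log_of_sum_rpow_eq_one {ι : Type*} [Fintype ι] (hcard : 1 < Fintype.card ι)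
    {q : ι → ℝ} (hq : ∀ i, 0 < q i) {β : ℝ} (hβ : 0 < β)
    (heq : ∑ i, q i ^ (1 / β) = 1) :
    β ≤ -(1 / (Fintype.card ι * log (Fintype.card ι)) * ∑ i, log (q i)) := by
  have hnlog : (0 : ℝ) < Fintype.card ι * log (Fintype.card ι) :=
    mul_pos (by positivity) (log_pos (by exact_mod_cast hcard))
  have hsum := sum_log_le_of_sum_eq_one (fun i => rpow_pos_of_pos (hq i) (1 / β)) heq
  simp only [log_rpow (hq _), ← mul_sum] at hsum
  rw [le_neg, one_div_mul_eq_div, div_le_iff₀ hnlog]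
  rw [div_mul_eq_mul_div, one_mul, div_le_iff₀ hβ] at hsum
  linarith

theorem beta_tendsto_one_of_avg_logK_general
    (q : (K : ℕ) → Fin K → ℝ) (hq : ∀ K, 2 ≤ K → ∀ i, 0 < q K i)
    (β : ℕ → ℝ) (hβ : ∀ K, 2 ≤ K → 1 < β K)
    (heq : ∀ K, 2 ≤ K → ∑ i, (q K i) ^ (1 / β K : ℝ) = 1)
    (hm : Filter.Tendsto (fun K : ℕ => (1 / (K * Real.log K) : ℝ) * ∑ i, Real.log (q K i))
      Filter.atTop (nhds (-1))) :
    Filter.Tendsto β Filter.atTop (nhds 1) := by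
  have hlower : ∀ᶠ K in atTop, 1 ≤ β K :=
    eventually_atTop.2 ⟨2, fun K hK => (hβ K hK).le⟩
  have hupper : ∀ᶠ K in atTop, β K ≤ -((1 / (K * log K) : ℝ) * ∑ i, log (q K i)) :=
    eventually_atTop.2 ⟨2, fun K hK => by
      simpa using le_neg_avg_log_of_sum_rpow_eq_one (by rw [Fintype.card_fin]; omega) (hq K hK)
        (by linarith [hβ K hK]) (heq K hK)⟩
  exact tendsto_of_tendsto_of_tendsto_of_le_of_le' tendsto_const_nhds
    (by simpa using hm.neg) hlower hupper

/-- If for each `K ≥ 2` the positive letter probabilities `q K i` sum to `1 - s` and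
`β K > 1` solves `∑ i, (q K i) ^ (1 / β K) = 1`, and if the average radix-`K` logarithm
`(1/(K ln K)) ∑ i, ln (q K i)` tends to `-1`, then `β K → 1` as `K → ∞`. -/
theorem beta_tendsto_one_of_avg_logK (s : ℝ) (hs0 : 0 < s) (hs1 : s < 1)
    (q : (K : ℕ) → Fin K → ℝ) (hq : ∀ K, 2 ≤ K → ∀ i, 0 < q K i)
    (hsum : ∀ K, 2 ≤ K → ∑ i, q K i = 1 - s)
    (β : ℕ → ℝ) (hβ : ∀ K, 2 ≤ K → 1 < β K)
    (heq : ∀ K, 2 ≤ K → ∑ i, (q K i) ^ (1 / β K : ℝ) = 1)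
    (hm : Filter.Tendsto (fun K : ℕ => (1 / (K * Real.log K) : ℝ) * ∑ i, Real.log (q K i))
      Filter.atTop (nhds (-1))) :
    Filter.Tendsto β Filter.atTop (nhds 1) :=
  beta_tendsto_one_of_avg_logK_general q hq β hβ heq hm
end
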